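/- The set of normal subgroups N of F_n such that F_n/N is a simple group is a G_delta (Pi^0_2) subset of the space G_n of normal subgroups of F_n. -/

import Mathlib

open scoped Classical

/-- The space of marked `n`-generated groups: normal subgroups of the free group. -/
def MarkedGroups (n : ℕ) : Type := {N : Subgroup (FreeGroup (Fin n)) // N.Normal}

/-- The Chabauty topology, induced from the Cantor space `{0,1}^{F_n}`. -/
noncomputable instance (n : ℕ) : TopologicalSpace (MarkedGroups n) :=
  TopologicalSpace.induced
    (fun (N : MarkedGroups n) (g : FreeGroup (Fin n)) => decide (g ∈ N.1))
    inferInstance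

/-!
`F_n/N` is simple iff `N ≠ F_n` and `N ⊔ ⟪g⟫ = F_n` for every `g ∉ N`, where `⟪g⟫` is the
normal closure. Membership of a fixed element is clopen in the Chabauty topology, and since `N` is
normal, `d ∈ N ⊔ K` means `d k⁻¹ ∈ N` for some `k ∈ K`: a countable union of clopen conditions.
The quantifiers over the countable group `F_n` then give a countable intersection of open sets.
-/

open Subgroup

theorem isSimpleGroup_iff_normalClosure_eq_top {G : Type*} [Group G] :
    IsSimpleGroup G ↔ Nontrivial G ∧ ∀ x : G, x ≠ 1 → normalClosure {x} = ⊤ := by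
  refine ⟨fun h => ⟨h.toNontrivial, fun x hx => ?_⟩, fun ⟨hnt, h⟩ => ⟨fun H hH => ?_⟩⟩
  · refine normalClosure_normal.eq_bot_or_eq_top.resolve_left fun hbot => hx ?_
    simpa [hbot] using subset_normalClosure (Set.mem_singleton x)
  · refine H.bot_or_exists_ne_one.imp_right fun ⟨x, hxH, hx⟩ => ?_
    exact top_le_iff.mp (h x hx ▸ normalClosure_le_normal (Set.singleton_subset_iff.mpr hxH))

theorem QuotientGroup.normalClosure_mk_eq_top_iff {G : Type*} [Group G] (N : Subgroup G)
    [N.Normal] (g : G) :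
    normalClosure {(g : G ⧸ N)} = ⊤ ↔ N ⊔ normalClosure {g} = ⊤ := by
  have hmk := QuotientGroup.mk'_surjective N
  have hmap := map_normalClosure {g} (QuotientGroup.mk' N) hmk
  rw [Set.image_singleton] at hmap
  rw [← QuotientGroup.comap_map_mk', ← comap_top (QuotientGroup.mk' N),
    (comap_injective hmk).eq_iff, hmap]
  rfl

theorem QuotientGroup.isSimpleGroup_iff {G : Type*} [Group G] (N : Subgroup G) [N.Normal] :
    IsSimpleGroup (G ⧸ N) ↔ N ≠ ⊤ ∧ ∀ g ∉ N, N ⊔ normalClosure {g} = ⊤ := by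
  rw [isSimpleGroup_iff_normalClosure_eq_top, QuotientGroup.nontrivial_iff,
    (QuotientGroup.mk_surjective (s := N)).forall]
  simp only [ne_eq, QuotientGroup.eq_one_iff, QuotientGroup.normalClosure_mk_eq_top_iff]

namespace MarkedGroups

variable {n : ℕ}

theorem isClopen_setOf_mem (g : FreeGroup (Fin n)) :
    IsClopen {N : MarkedGroups n | g ∈ N.1} := by
  have hcont : Continuous fun N : MarkedGroups n => decide (g ∈ N.1) :=
    (continuous_apply g).comp (continuous_induced_dom :
      Continuous fun (N : MarkedGroups n) (g : FreeGroup (Fin n)) => decide (g ∈ N.1))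
  simpa only [Set.preimage, Set.mem_singleton_iff, decide_eq_true_eq] using
    (isClopen_discrete {true}).preimage hcont

theorem isOpen_setOf_ne_top : IsOpen {N : MarkedGroups n | N.1 ≠ ⊤} := by
  simp only [Ne, eq_top_iff', not_forall, Set.ofPred_exists]
  exact isOpen_iUnion fun g => (isClopen_setOf_mem g).compl.isOpen

theorem isOpen_setOf_mem_sup (K : Subgroup (FreeGroup (Fin n))) (d : FreeGroup (Fin n)) :
    IsOpen {N : MarkedGroups n | d ∈ N.1 ⊔ K} := by
  have : {N : MarkedGroups n | d ∈ N.1 ⊔ K} = ⋃ k ∈ K, {N | d * k⁻¹ ∈ N.1} := by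
    ext N
    have := N.2
    simp only [Set.mem_ofPred_eq, Set.mem_iUnion, exists_prop, mem_sup_of_normal_left]
    constructor
    · rintro ⟨y, hy, k, hk, rfl⟩
      exact ⟨k, hk, by simpa using hy⟩
    · rintro ⟨k, hk, hdk⟩
      exact ⟨d * k⁻¹, hdk, k, hk, inv_mul_cancel_right d k⟩
  rw [this]
  exact isOpen_biUnion fun k _ => (isClopen_setOf_mem _).isOpen

theorem isGδ_setOf_sup_eq_top (K : Subgroup (FreeGroup (Fin n))) :
    IsGδ {N : MarkedGroups n | N.1 ⊔ K = ⊤} := by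
  simp only [eq_top_iff', Set.ofPred_forall]
  exact .iInter fun d => (isOpen_setOf_mem_sup K d).isGδ

end MarkedGroups

theorem simple_is_Gdelta (n : ℕ) :
    IsGδ {N : MarkedGroups n | letI := N.2;
      IsSimpleGroup (FreeGroup (Fin n) ⧸ N.1)} := by
  have hsimple : {N : MarkedGroups n | letI := N.2; IsSimpleGroup (FreeGroup (Fin n) ⧸ N.1)} =
      {N | N.1 ≠ ⊤} ∩ ⋂ g, {N | g ∈ N.1} ∪ {N | N.1 ⊔ normalClosure {g} = ⊤} := by
    ext N
    have := N.2
    simp only [Set.mem_ofPred_eq, QuotientGroup.isSimpleGroup_iff, Set.mem_inter_iff,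
      Set.mem_iInter, Set.mem_union, or_iff_not_imp_left]
  rw [hsimple]
  exact MarkedGroups.isOpen_setOf_ne_top.isGδ.inter <| .iInter fun g =>
    (MarkedGroups.isClopen_setOf_mem g).isOpen.isGδ.union (MarkedGroups.isGδ_setOf_sup_eq_top _)
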